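/- The state ρ₅₅ is not separable; together with the positivity of its partial transpose, ρ₅₅ is a PPT entangled state. -/

import Mathlib

open Matrix ComplexOrder

noncomputable def M55 : Matrix (Fin 9) (Fin 9) ℂ :=
  !![0, 0, 0, 0, 0, 0, 0, 0, 0;
     0, 2, -1, 0, 0, 0, 0, 0, 1;
     0, -1, 1, 0, 0, 0, 0, 0, -1;
     0, 0, 0, 3, 0, -1, -1, 0, 0;
     0, 0, 0, 0, 0, 0, 0, 0, 0;
     0, 0, 0, -1, 0, 1, 1, 0, 0;
     0, 0, 0, -1, 0, 1, 1, 0, 0;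
     0, 0, 0, 0, 0, 0, 0, 2, -2;
     0, 1, -1, 0, 0, 0, 0, -2, 3]

/-- The index map `(i, j) ↦ 3 i + j` from `Fin 3 × Fin 3` to `Fin 9`. -/
def idx (p : Fin 3 × Fin 3) : Fin 9 :=
  ⟨3 * p.1.val + p.2.val, by have h1 := p.1.isLt; have h2 := p.2.isLt; omega⟩

/-- The state `ρ₅₅`, viewed as an operator on `ℂ³ ⊗ ℂ³`. -/
noncomputable def rho55 : Matrix (Fin 3 × Fin 3) (Fin 3 × Fin 3) ℂ :=
  fun p q => (1 / 13 : ℂ) * M55 (idx p) (idx q)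

/-- The partial transpose on the second factor: `(ρ^{T_B})_{(i,j),(k,l)} = ρ_{(i,l),(k,j)}`. -/
noncomputable def ptrans (ρ : Matrix (Fin 3 × Fin 3) (Fin 3 × Fin 3) ℂ) :
    Matrix (Fin 3 × Fin 3) (Fin 3 × Fin 3) ℂ :=
  fun p q => ρ (p.1, q.2) (q.1, p.2)

/-- The product vector `a ⊗ b ∈ ℂ³ ⊗ ℂ³`, with `(i,j)`-th component `a i * b j`. -/
def prodVec (a b : Fin 3 → ℂ) : Fin 3 × Fin 3 → ℂ := fun p => a p.1 * b p.2

/-- A matrix on `ℂ³ ⊗ ℂ³` is separable if it is a finite sum of outer products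
`w w†` of product vectors `w = a ⊗ b`. -/
noncomputable def IsSeparableState (ρ : Matrix (Fin 3 × Fin 3) (Fin 3 × Fin 3) ℂ) : Prop :=
  ∃ (k : ℕ) (a b : Fin k → Fin 3 → ℂ),
    ρ = ∑ i : Fin k,
      Matrix.vecMulVec (prodVec (a i) (b i)) (fun q => starRingEnd ℂ (prodVec (a i) (b i) q))

/-!
`ρ₅₅` and its partial transpose are positive semidefinite because both factor as `Fᴴ D F` with
`D` a nonnegative diagonal matrix (an `LDLᴴ` decomposition).

Entanglement follows from the range criterion. If `ρ = ∑ₖ wₖ wₖ†` with `wₖ = aₖ ⊗ bₖ`, then every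
`wₖ` is orthogonal to `ker ρ`, and since `ρ^Γ = ∑ₖ (aₖ ⊗ b̄ₖ)(aₖ ⊗ b̄ₖ)†`, every `aₖ ⊗ b̄ₖ` is
orthogonal to `ker ρ^Γ`. For `ρ₅₅` these orthogonality relations are six bilinear equations in
`a` and `b̄` whose only solutions have `a = 0` or `b = 0`; hence `ρ₅₅ = 0`, which it is not.
-/

theorem Matrix.star_dotProduct_eq_zero_of_sum_vecMulVec_mulVec_eq_zero {ι n R : Type*}
    [Fintype ι] [Fintype n] [PartialOrder R] [NonUnitalRing R] [StarRing R] [StarOrderedRing R]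
    [NoZeroDivisors R] {w : ι → n → R} {y : n → R}
    (hy : (∑ i, vecMulVec (w i) (star (w i))) *ᵥ y = 0) (i : ι) : star (w i) ⬝ᵥ y = 0 := by
  let A : Matrix n ι R := of fun p i => w i p
  have hA : ∑ i, vecMulVec (w i) (star (w i)) = A * Aᴴ := by
    ext p q
    simp [A, mul_apply, vecMulVec_apply, Matrix.sum_apply]
  rw [hA, self_mul_conjTranspose_mulVec_eq_zero] at hy
  exact congr_fun hy i

theorem star_prodVec (a b : Fin 3 → ℂ) : star (prodVec a b) = prodVec (star a) (star b) := by
  ext p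
  simp [prodVec]

theorem ptrans_sum {ι : Type*} [Fintype ι] (f : ι → Matrix (Fin 3 × Fin 3) (Fin 3 × Fin 3) ℂ) :
    ptrans (∑ i, f i) = ∑ i, ptrans (f i) := by
  ext p q
  simp [ptrans, Matrix.sum_apply]

theorem ptrans_vecMulVec_prodVec (a b : Fin 3 → ℂ) :
    ptrans (vecMulVec (prodVec a b) (star (prodVec a b))) =
      vecMulVec (prodVec a (star b)) (star (prodVec a (star b))) := by
  ext p q
  simp only [ptrans, vecMulVec_apply, prodVec, Pi.star_apply, star_mul', RCLike.star_def,
    RingHomCompTriple.comp_apply, RingHom.id_apply]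
  ring

noncomputable def idxEquiv : Fin 3 × Fin 3 ≃ Fin 9 := Equiv.ofBijective idx (by decide)

theorem smul_submatrix_idx_mulVec_eq_zero {M : Matrix (Fin 9) (Fin 9) ℂ} {y : Fin 9 → ℂ}
    (c : ℂ) (hy : M *ᵥ y = 0) : (c • M.submatrix idx idx) *ᵥ (y ∘ idx) = 0 := by
  have h : (y ∘ idx) ∘ idxEquiv.symm = y := funext fun j => congrArg y (idxEquiv.apply_symm_apply j)
  rw [smul_mulVec, show M.submatrix idx idx = M.submatrix idx idxEquiv from rfl,
    submatrix_mulVec_equiv, h, hy]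
  simp

noncomputable def M55pt : Matrix (Fin 9) (Fin 9) ℂ :=
  !![0, 0, 0, 0, 0, 0, 0, 0, 0;
     0, 2, -1, 0, 0, 0, 0, 0, 0;
     0, -1, 1, 0, 0, 0, 0, 1, -1;
     0, 0, 0, 3, 0, -1, -1, 0, 1;
     0, 0, 0, 0, 0, 0, 0, 0, 0;
     0, 0, 0, -1, 0, 1, 0, 0, 0;
     0, 0, 0, -1, 0, 0, 1, 0, 0;
     0, 0, 1, 0, 0, 0, 0, 2, -2;
     0, 0, -1, 1, 0, 0, 0, -2, 3]

theorem rho55_eq_smul_submatrix : rho55 = (1 / 13 : ℂ) • M55.submatrix idx idx := rfl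

theorem ptrans_rho55_eq_smul_submatrix : ptrans rho55 = (1 / 13 : ℂ) • M55pt.submatrix idx idx := by
  ext ⟨i, j⟩ ⟨k, l⟩
  fin_cases i <;> fin_cases j <;> fin_cases k <;> fin_cases l <;> rfl

noncomputable def M55Factor : Matrix (Fin 5) (Fin 9) ℂ :=
  !![0, 1, -1, 0, 0, 0, 0, 0, 1;
     0, 1, 0, 0, 0, 0, 0, 0, 0;
     0, 0, 0, 0, 0, 0, 0, 1, -1;
     0, 0, 0, -1, 0, 1, 1, 0, 0;
     0, 0, 0, 1, 0, 0, 0, 0, 0]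

noncomputable def M55ptFactor : Matrix (Fin 5) (Fin 9) ℂ :=
  !![0, 2, -1, 0, 0, 0, 0, 0, 0;
     0, 0, 1, 0, 0, 0, 0, 2, -2;
     0, 0, 0, 3, 0, -1, -1, 0, 1;
     0, 0, 0, 0, 0, 2, -1, 0, 1;
     0, 0, 0, 0, 0, 0, 1, 0, 1]

theorem M55_eq_conjTranspose_mul_diagonal_mul :
    M55 = M55Factorᴴ * diagonal (![1, 1, 2, 1, 2] : Fin 5 → ℂ) * M55Factor := by
  ext i j
  fin_cases i <;> fin_cases j <;>
    norm_num [M55, M55Factor, mul_apply, Fin.sum_univ_succ, diagonal]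

theorem M55pt_eq_conjTranspose_mul_diagonal_mul :
    M55pt = M55ptFactorᴴ * diagonal (![1/2, 1/2, 1/3, 1/6, 1/2] : Fin 5 → ℂ) * M55ptFactor := by
  ext i j
  fin_cases i <;> fin_cases j <;>
    norm_num [M55pt, M55ptFactor, mul_apply, Fin.sum_univ_succ, diagonal, map_ofNat]

theorem rho55_posSemidef : rho55.PosSemidef := by
  have hM : M55.PosSemidef := by
    rw [M55_eq_conjTranspose_mul_diagonal_mul]
    refine (PosSemidef.diagonal fun i => ?_).conjTranspose_mul_mul_same _
    fin_cases i <;> simp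
  rw [rho55_eq_smul_submatrix]
  exact (hM.submatrix idx).smul (by positivity)

theorem ptrans_rho55_posSemidef : (ptrans rho55).PosSemidef := by
  have hM : M55pt.PosSemidef := by
    rw [M55pt_eq_conjTranspose_mul_diagonal_mul]
    refine (PosSemidef.diagonal fun i => ?_).conjTranspose_mul_mul_same _
    fin_cases i <;> simp
  rw [ptrans_rho55_eq_smul_submatrix]
  exact (hM.submatrix idx).smul (by positivity)

noncomputable def M55Ker : Matrix (Fin 4) (Fin 9) ℂ :=
  !![1, 0, 0, 0, 0, 0, 0, 0, 0;
     0, 0, 0, 0, 1, 0, 0, 0, 0;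
     0, 0, 0, 0, 0, -1, 1, 0, 0;
     0, 0, 1, 0, 0, 0, 0, 1, 1]

noncomputable def M55ptKer : Matrix (Fin 2) (Fin 9) ℂ :=
  !![0, -1, -2, 0, 0, 0, 0, 1, 0;
     0, 1, 2, -1, 0, -1, -1, 0, 1]

theorem rho55_mulVec_M55Ker (r : Fin 4) : rho55 *ᵥ (M55Ker r ∘ idx) = 0 := by
  rw [rho55_eq_smul_submatrix]
  refine smul_submatrix_idx_mulVec_eq_zero _ ?_
  ext i
  fin_cases r <;> fin_cases i <;> norm_num [M55, M55Ker, mulVec, dotProduct, Fin.sum_univ_succ]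

theorem ptrans_rho55_mulVec_M55ptKer (r : Fin 2) : ptrans rho55 *ᵥ (M55ptKer r ∘ idx) = 0 := by
  rw [ptrans_rho55_eq_smul_submatrix]
  refine smul_submatrix_idx_mulVec_eq_zero _ ?_
  ext i
  fin_cases r <;> fin_cases i <;> norm_num [M55pt, M55ptKer, mulVec, dotProduct, Fin.sum_univ_succ]

theorem rho55_ne_zero : rho55 ≠ 0 := fun h => by
  simpa [rho55, M55, idx] using congr_fun (congr_fun h (0, 1)) (0, 1)

theorem Fin.eq_zero_of_three {α : Type*} [Zero α] {v : Fin 3 → α} (h0 : v 0 = 0) (h1 : v 1 = 0)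
    (h2 : v 2 = 0) : v = 0 := by
  ext j
  fin_cases j <;> assumption

open ComplexConjugate

section KernelConditions

variable {a b : Fin 3 → ℂ}

/- The hypotheses `hρᵢ` and `hΓⱼ` below are the relations `a ⊗ b ⊥ M55Ker r` and
`a ⊗ b̄ ⊥ M55ptKer r` written out; the first one, `a 0 * b 0 = 0`, gives the case split. -/

theorem eq_zero_or_eq_zero_of_left_apply_zero (ha0 : a 0 = 0) (hρ₂ : a 1 = 0 ∨ b 1 = 0)
    (hρ₃ : a 2 * b 0 = a 1 * b 2) (hρ₄ : a 0 * b 2 + a 2 * (b 1 + b 2) = 0)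
    (hΓ₁ : a 2 * conj (b 1) = a 0 * (conj (b 1) + 2 * conj (b 2)))
    (hΓ₂ : a 0 * (conj (b 1) + 2 * conj (b 2)) + a 2 * conj (b 2) =
      (a 1 + a 2) * conj (b 0) + a 1 * conj (b 2)) :
    a = 0 ∨ b = 0 := by
  by_cases ha2 : a 2 = 0
  · by_cases ha1 : a 1 = 0
    · exact Or.inl (Fin.eq_zero_of_three ha0 ha1 ha2)
    have hb2 : b 2 = 0 := by simpa [ha1, ha2] using hρ₃
    have hb0 : b 0 = 0 := by simpa [ha0, ha1, ha2, hb2] using hΓ₂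
    exact Or.inr (Fin.eq_zero_of_three hb0 (hρ₂.resolve_left ha1) hb2)
  · have hb1 : b 1 = 0 := by simpa [ha0, ha2] using hΓ₁
    have hb2 : b 2 = 0 := by simpa [ha0, ha2, hb1] using hρ₄
    have hb0 : b 0 = 0 := by simpa [ha2, hb2] using hρ₃
    exact Or.inr (Fin.eq_zero_of_three hb0 hb1 hb2)

theorem eq_zero_or_eq_zero_of_right_apply_zero (hb0 : b 0 = 0) (hρ₂ : a 1 = 0 ∨ b 1 = 0)
    (hρ₃ : a 2 * b 0 = a 1 * b 2) (hρ₄ : a 0 * b 2 + a 2 * (b 1 + b 2) = 0)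
    (hΓ₁ : a 2 * conj (b 1) = a 0 * (conj (b 1) + 2 * conj (b 2)))
    (hΓ₂ : a 0 * (conj (b 1) + 2 * conj (b 2)) + a 2 * conj (b 2) =
      (a 1 + a 2) * conj (b 0) + a 1 * conj (b 2)) :
    a = 0 ∨ b = 0 := by
  by_cases ha1 : a 1 = 0
  · by_cases ha2 : a 2 = 0
    · by_cases ha0 : a 0 = 0
      · exact Or.inl (Fin.eq_zero_of_three ha0 ha1 ha2)
      have hb2 : b 2 = 0 := by simpa [ha0, ha2] using hρ₄
      have hb1 : b 1 = 0 := by simpa [ha0, ha2, hb2] using hΓ₁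
      exact Or.inr (Fin.eq_zero_of_three hb0 hb1 hb2)
    have hc0 : conj (b 0) = 0 := by simp [hb0]
    have hsum : b 1 + b 2 = 0 := by
      have h : a 2 * conj (b 1 + b 2) = 0 := by
        rw [map_add]
        linear_combination hΓ₁ + hΓ₂ + (a 1 + a 2) * hc0 + conj (b 2) * ha1
      exact (map_eq_zero _).mp ((mul_eq_zero.mp h).resolve_left ha2)
    have h : a 0 * b 2 = 0 := by linear_combination hρ₄ - a 2 * hsum
    obtain ha0 | hb2 := mul_eq_zero.mp h
    · have hb1 : b 1 = 0 := by simpa [ha0, ha2] using hΓ₁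
      exact Or.inr (Fin.eq_zero_of_three hb0 hb1 (by linear_combination hsum - hb1))
    · exact Or.inr (Fin.eq_zero_of_three hb0 (by linear_combination hsum - hb2) hb2)
  · have hb2 : b 2 = 0 := by simpa [hb0, ha1] using hρ₃
    exact Or.inr (Fin.eq_zero_of_three hb0 (hρ₂.resolve_left ha1) hb2)

theorem eq_zero_or_eq_zero_of_orthogonal_kernels
    (hρ : ∀ r, prodVec a b ⬝ᵥ (M55Ker r ∘ idx) = 0)
    (hΓ : ∀ r, prodVec a (star b) ⬝ᵥ (M55ptKer r ∘ idx) = 0) : a = 0 ∨ b = 0 := by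
  have hρ₁ := hρ 0
  have hρ₂ := hρ 1
  have hρ₃ := hρ 2
  have hρ₄ := hρ 3
  have hΓ₁ := hΓ 0
  have hΓ₂ := hΓ 1
  simp only [dotProduct, prodVec, M55Ker, M55ptKer, idx, Function.comp_apply, of_apply,
    cons_val', cons_val_fin_one, cons_val_zero, cons_val_succ', cons_val_one, cons_val,
    Fintype.sum_prod_type, Fin.sum_univ_three, Fin.isValue, Fin.coe_ofNat_eq_mod, Nat.zero_mod,
    Nat.one_mod, Nat.mod_succ, Fin.zero_eta, Fin.reduceFinMk, Nat.reduceMul, add_zero, zero_add,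
    mul_zero, mul_one, mul_neg, mul_eq_zero, Pi.star_apply, RCLike.star_def]
    at hρ₁ hρ₂ hρ₃ hρ₄ hΓ₁ hΓ₂
  obtain ha0 | hb0 := hρ₁
  · exact eq_zero_or_eq_zero_of_left_apply_zero ha0 hρ₂ (by linear_combination hρ₃)
      (by linear_combination hρ₄) (by linear_combination hΓ₁) (by linear_combination hΓ₂)
  · exact eq_zero_or_eq_zero_of_right_apply_zero hb0 hρ₂ (by linear_combination hρ₃)
      (by linear_combination hρ₄) (by linear_combination hΓ₁) (by linear_combination hΓ₂)

end KernelConditions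

/-- `ρ₅₅` is a PPT entangled state: it is positive semidefinite,
its partial transpose is positive semidefinite, and it is not separable. -/
theorem rho55_ppt_entangled :
    rho55.PosSemidef ∧ (ptrans rho55).PosSemidef ∧ ¬ IsSeparableState rho55 := by
  refine ⟨rho55_posSemidef, ptrans_rho55_posSemidef, ?_⟩
  rintro ⟨k, a, b, hρ⟩
  replace hρ : rho55 = ∑ i, vecMulVec (prodVec (a i) (b i)) (star (prodVec (a i) (b i))) := hρ
  have hΓ : ptrans rho55 =
      ∑ i, vecMulVec (prodVec (a i) (star (b i))) (star (prodVec (a i) (star (b i)))) := by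
    simp only [hρ, ptrans_sum, ptrans_vecMulVec_prodVec]
  have hzero (i : Fin k) : a i = 0 ∨ b i = 0 := by
    simpa using eq_zero_or_eq_zero_of_orthogonal_kernels (a := star (a i)) (b := star (b i))
      (fun r => by
        rw [← star_prodVec]
        exact star_dotProduct_eq_zero_of_sum_vecMulVec_mulVec_eq_zero
          (hρ ▸ rho55_mulVec_M55Ker r) i)
      (fun r => by
        rw [← star_prodVec]
        exact star_dotProduct_eq_zero_of_sum_vecMulVec_mulVec_eq_zero
          (hΓ ▸ ptrans_rho55_mulVec_M55ptKer r) i)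
  refine rho55_ne_zero (hρ.trans (Finset.sum_eq_zero fun i _ => ?_))
  obtain h | h := hzero i <;> ext <;> simp [h, prodVec, vecMulVec_apply]
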